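/- In the distributive lattice of antichains of intervals over a finite totally ordered set (equivalently, the ideal completion of intervals ordered by reverse inclusion), the Brouwerian difference A − B = {I ∈ A : no J ∈ B satisfies J ⊆ I} is the least element X of the lattice such that A ≤ B ∨ X; in particular A − B ≤ A and A ≤ B ∨ (A − B). -/

import Mathlib

/-- `cont p q`: interval `p` is contained in interval `q`. -/
def cont {O : Type*} [LinearOrder O] (p q : O × O) : Prop :=
  q.1 ≤ p.1 ∧ p.2 ≤ q.2

/-- `ale A B`: every interval of `A` contains some interval of `B`. -/
def ale {O : Type*} [LinearOrder O] (A B : Set (O × O)) : Prop :=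
  ∀ p ∈ A, ∃ q ∈ B, cont q p

/-- The join `A ∨ B`: inclusion-minimal intervals of `A ∪ B`. -/
def ajoin {O : Type*} [LinearOrder O] (A B : Set (O × O)) : Set (O × O) :=
  {p ∈ A ∪ B | ∀ q ∈ A ∪ B, cont q p → q = p}

/-- The Brouwerian difference `A − B`: intervals of `A` containing no interval of `B`. -/
def adiff {O : Type*} [LinearOrder O] (A B : Set (O × O)) : Set (O × O) :=
  {p ∈ A | ∀ q ∈ B, ¬ cont q p}

/-!
Every interval `p ∈ A` is covered in `B ∨ (A − B)` by an interval of `B` inside it if there is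
one, and by `p` itself otherwise; the antichain property of `A` and `B` makes that interval
minimal in `B ∪ (A − B)`. Conversely, if `A ≤ B ∨ X`, an interval of `A − B` contains no
interval of `B`, so the interval of `B ∪ X` inside it must come from `X`.
-/

section Intervals

variable {O : Type*} [LinearOrder O] {A B C X : Set (O × O)}

lemma cont_refl (p : O × O) : cont p p := ⟨le_rfl, le_rfl⟩

lemma cont_trans {p q r : O × O} (hpq : cont p q) (hqr : cont q r) : cont p r :=
  ⟨hqr.1.trans hpq.1, hpq.2.trans hqr.2⟩

lemma ajoin_subset_union : ajoin A B ⊆ A ∪ B := fun _ hp => hp.1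

lemma ale.mono_right (h : ale A B) (hBC : B ⊆ C) : ale A C := fun p hp =>
  let ⟨q, hq, hqp⟩ := h p hp
  ⟨q, hBC hq, hqp⟩

lemma adiff_ale_left : ale (adiff A B) A := fun p hp => ⟨p, hp.1, cont_refl p⟩

lemma adiff_ale_of_ale_union (h : ale A (B ∪ X)) : ale (adiff A B) X := by
  intro p hp
  obtain ⟨q, hq | hq, hqp⟩ := h p hp.1
  · exact absurd hqp (hp.2 q hq)
  · exact ⟨q, hq, hqp⟩

lemma ale_ajoin_adiff (hA : IsAntichain cont A) (hB : IsAntichain cont B) :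
    ale A (ajoin B (adiff A B)) := by
  intro p hp
  by_cases hpB : ∃ q ∈ B, cont q p
  · obtain ⟨q, hq, hqp⟩ := hpB
    refine ⟨q, ⟨Or.inl hq, ?_⟩, hqp⟩
    rintro r (hr | hr) hrq
    · exact hB.eq hr hq hrq
    · -- `r ⊆ q ⊆ p` inside the antichain `A` forces `r = p`, which contains `q ∈ B`.
      obtain rfl := hA.eq hr.1 hp (cont_trans hrq hqp)
      exact absurd hqp (hr.2 q hq)
  · push Not at hpB
    refine ⟨p, ⟨Or.inr ⟨hp, hpB⟩, ?_⟩, cont_refl p⟩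
    rintro r (hr | hr) hrp
    · exact absurd hrp (hpB r hr)
    · exact hA.eq hr.1 hp hrp

end Intervals

theorem stmt19_general {O : Type*} [LinearOrder O] (A B : Set (O × O))
    (hAa : IsAntichain (cont (O := O)) A)
    (hBa : IsAntichain (cont (O := O)) B) :
    ale (adiff A B) A ∧ ale A (ajoin B (adiff A B)) ∧
      ∀ X : Set (O × O), (∀ p ∈ X, p.1 ≤ p.2) → IsAntichain (cont (O := O)) X →
        ale A (ajoin B X) → ale (adiff A B) X :=
  ⟨adiff_ale_left, ale_ajoin_adiff hAa hBa,
    fun _ _ _ hle => adiff_ale_of_ale_union (hle.mono_right ajoin_subset_union)⟩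

/-- `A − B` is the least antichain `X` such that `A ≤ B ∨ X`;
in particular `A − B ≤ A` and `A ≤ B ∨ (A − B)`. -/
theorem stmt19 {O : Type*} [LinearOrder O] [Fintype O] (A B : Set (O × O))
    (hA : ∀ p ∈ A, p.1 ≤ p.2) (hB : ∀ p ∈ B, p.1 ≤ p.2)
    (hAa : IsAntichain (cont (O := O)) A)
    (hBa : IsAntichain (cont (O := O)) B) :
    ale (adiff A B) A ∧ ale A (ajoin B (adiff A B)) ∧
      ∀ X : Set (O × O), (∀ p ∈ X, p.1 ≤ p.2) → IsAntichain (cont (O := O)) X →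
        ale A (ajoin B X) → ale (adiff A B) X :=
  stmt19_general A B hAa hBa
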